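/- Let A ∈ S_{++}^q and B ∈ S_{++}^q, and let c = d + 1 − 2ν ≥ 0 for dimension d = q and parameter ν ≤ (q+1)/2 with the convention c > 0, or more generally c ≥ 0 with c = 0 requiring ν = (q+1)/2. Then the algebraic Riccati equation c·M + M B M = A has a unique solution M ∈ S_{++}^q. -/

import Mathlib

/-!
Write `B = S * S` with `S = √B` strictly positive. Conjugation `M ↦ S * M * S` is a bijection
preserving strict positivity, and it turns `c • M + M * B * M = A` into `c • N + N * N = T`
with `T = S * A * S`. This quadratic equation is solved by `N = g(T)` for
`g x = (√(c² + 4x) - c) / 2`, and its strictly positive solution is unique because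
`(N + c/2)² = T + c²/4` and nonnegative square roots are unique.
Positive definite matrices are the strictly positive elements for the Loewner order, so the
argument runs in any algebra with a continuous functional calculus.
-/

lemma add_smul_one_sq {R : Type*} [Ring R] [Algebra ℝ R] (c : ℝ) (N : R) :
    (N + (c / 2) • (1 : R)) ^ 2 = c • N + N * N + (c ^ 2 / 4) • (1 : R) := by
  simp only [sq, add_mul, mul_add, smul_mul_assoc, mul_smul_comm, mul_one, one_mul]
  module

section Riccati

variable {A : Type*} [PartialOrder A] [Ring A] [StarRing A] [TopologicalSpace A]
  [StarOrderedRing A] [Algebra ℝ A] [ContinuousFunctionalCalculus ℝ A IsSelfAdjoint]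
  [NonnegSpectrumClass ℝ A]

lemma add_smul_one_nonneg {c : ℝ} (hc : 0 ≤ c) {N : A} (hN : 0 ≤ N) :
    0 ≤ N + c • (1 : A) := by
  rw [← Algebra.algebraMap_eq_smul_one, ← cfc_id' ℝ N, ← cfc_add_const ..]
  exact cfc_nonneg fun x hx => add_nonneg (spectrum_nonneg_of_nonneg hN hx) hc

lemma exists_isStrictlyPositive_smul_add_mul_self_eq (c : ℝ) {T : A}
    (hT : IsStrictlyPositive T) : ∃ N : A, IsStrictlyPositive N ∧ c • N + N * N = T := by
  set g : ℝ → ℝ := fun x => (√(c ^ 2 + 4 * x) - c) / 2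
  have hg : ∀ x, 0 < x → 0 < g x ∧ c * g x + g x * g x = x := by
    intro x hx
    have hs : √(c ^ 2 + 4 * x) ^ 2 = c ^ 2 + 4 * x := Real.sq_sqrt (by positivity)
    have hlt : c < √(c ^ 2 + 4 * x) := by
      nlinarith [Real.sqrt_nonneg (c ^ 2 + 4 * x)]
    exact ⟨by simp only [g]; linarith, by simp only [g]; linear_combination hs / 4⟩
  refine ⟨cfc g T, ?_, ?_⟩
  · exact (cfc_isStrictlyPositive_iff g T).mpr fun x hx => (hg x (hT.spectrum_pos hx)).1
  · rw [← cfc_const_mul .., ← cfc_mul .., ← cfc_add ..]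
    conv_rhs => rw [← cfc_id' ℝ T]
    exact cfc_congr fun x hx => (hg x (hT.spectrum_pos hx)).2

variable [IsSemitopologicalRing A] [T2Space A]

lemma injOn_smul_add_mul_self {c : ℝ} (hc : 0 ≤ c) :
    Set.InjOn (fun N : A => c • N + N * N) {N | 0 ≤ N} := by
  intro N₁ hN₁ N₂ hN₂ h
  have hsq : (N₁ + (c / 2) • (1 : A)) ^ 2 = (N₂ + (c / 2) • (1 : A)) ^ 2 := by
    rw [add_smul_one_sq, add_smul_one_sq]
    exact congrArg (· + _) h
  have hc2 : 0 ≤ c / 2 := by positivity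
  exact add_right_cancel <| (CFC.sq_eq_sq_iff _ _ (add_smul_one_nonneg hc2 hN₁)
    (add_smul_one_nonneg hc2 hN₂)).mp hsq

lemma existsUnique_isStrictlyPositive_smul_add_mul_self_eq {c : ℝ} (hc : 0 ≤ c) {T : A}
    (hT : IsStrictlyPositive T) : ∃! N : A, IsStrictlyPositive N ∧ c • N + N * N = T := by
  obtain ⟨N, hN, hNT⟩ := exists_isStrictlyPositive_smul_add_mul_self_eq c hT
  exact ⟨N, ⟨hN, hNT⟩, fun N' ⟨hN', hN'T⟩ =>
    injOn_smul_add_mul_self hc hN'.nonneg hN.nonneg (hN'T.trans hNT.symm)⟩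

lemma existsUnique_isStrictlyPositive_riccati {c : ℝ} (hc : 0 ≤ c) {P B : A}
    (hP : IsStrictlyPositive P) (hB : IsStrictlyPositive B) :
    ∃! M : A, IsStrictlyPositive M ∧ c • M + M * B * M = P := by
  obtain ⟨S, hS, rfl⟩ : ∃ S : A, IsStrictlyPositive S ∧ S * S = B :=
    ⟨CFC.sqrt B, hB.sqrt, CFC.sqrt_mul_sqrt_self B⟩
  have hconj : Function.Bijective (fun M : A => S * M * S) := by
    obtain ⟨u, hu⟩ := hS.isUnit
    rw [← hu]
    exact (Units.mulRight u).bijective.comp (Units.mulLeft u).bijective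
  have hconj_riccati (M : A) :
      c • (S * M * S) + (S * M * S) * (S * M * S) = S * (c • M + M * (S * S) * M) * S := by
    simp only [mul_add, add_mul, mul_smul_comm, smul_mul_assoc, mul_assoc]
  have hSPS : IsStrictlyPositive (S * P * S) :=
    IsStrictlyPositive.conjugate_of_isUnit_of_isSelfAdjoint P S hS.isUnit hS.isSelfAdjoint
  have h := existsUnique_isStrictlyPositive_smul_add_mul_self_eq hc hSPS
  rw [hconj.existsUnique_iff] at h
  refine (existsUnique_congr fun M => ?_).mp h
  rw [hconj_riccati, hconj.injective.eq_iff,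
    hS.isUnit.isStrictlyPositive_iff_conjugate_of_isSelfAdjoint M S hS.isSelfAdjoint]

end Riccati

/-- Existence and uniqueness of the positive definite solution of the
algebraic Riccati equation `c·M + M B M = A` (with `c = q + 1 − 2ν ≥ 0`),
characterizing the mode of the `MGIG_q(ν, A, B)` distribution. -/
theorem stmt_19 (q : ℕ) (A B : Matrix (Fin q) (Fin q) ℝ)
    (hA : A.PosDef) (hB : B.PosDef) (c : ℝ) (hc : 0 ≤ c) :
    ∃! M : Matrix (Fin q) (Fin q) ℝ, M.PosDef ∧ c • M + M * B * M = A := by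
  open scoped MatrixOrder in
  simpa only [← Matrix.isStrictlyPositive_iff_posDef] using
    existsUnique_isStrictlyPositive_riccati hc hA.isStrictlyPositive hB.isStrictlyPositive
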